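/- Let l ≥ 1 and let ξ ∈ V_l. Then q_l(h(q_{l+1}(h ξ))) = (L−1)·ξ. -/

import Mathlib

noncomputable section

open scoped ComplexInnerProductSpace

namespace UCoxMasa

/-- The universal Coxeter matrix on `Fin L`: all off-diagonal entries are `0` (representing ∞). -/
def Mat (L : ℕ) : CoxeterMatrix (Fin L) where
  M := fun i j => if i = j then 1 else 0
  isSymm := by
    ext i j
    by_cases h : i = j <;> simp [Matrix.transpose, h, eq_comm]
  diagonal := fun i => by simp
  off_diagonal := fun i j h => by simp [h]

/-- The universal Coxeter group on `L` generators: free product of `L` copies of `ℤ/2ℤ`. -/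
abbrev W (L : ℕ) : Type := (Mat L).Group

/-- The distinguished Coxeter system of `W L`. -/
def cs (L : ℕ) : CoxeterSystem (Mat L) (W L) := CoxeterMatrix.toCoxeterSystem (Mat L)

/-- The simple reflection associated to `i : Fin L`. -/
def σ {L : ℕ} (i : Fin L) : W L := (cs L).simple i

/-- Word length on `W L` with respect to the generating set of simple reflections. -/
def len {L : ℕ} (w : W L) : ℕ := (cs L).length w

/-- The Hilbert space `ℓ²(W)`. -/
abbrev H (L : ℕ) : Type := lp (fun _ : W L => ℂ) 2

/-- The standard orthonormal basis vector `δ_w` of `ℓ²(W)`. -/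
def δ {L : ℕ} (w : W L) : H L :=
  letI := Classical.decEq (W L)
  lp.single 2 w 1

/-- `V l`: the linear span of `{δ_w : ℓ(w) = l}`. -/
def V (L : ℕ) (l : ℕ) : Submodule ℂ (H L) :=
  Submodule.span ℂ {x : H L | ∃ w : W L, len w = l ∧ x = δ w}

/-- `S_l`: the linear span of `q_l(h V_{l-1}) ∪ q_l(R_h V_{l-1})`,
given the projections `Q`, the operator `h` and the right operator `Rh`. -/
def Sl (L : ℕ) (Q : ℕ → (H L →L[ℂ] H L)) (h Rh : H L →L[ℂ] H L) (l : ℕ) :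
    Submodule ℂ (H L) :=
  Submodule.span ℂ
    ({x : H L | ∃ y ∈ V L (l - 1), x = Q l (h y)} ∪
      {x : H L | ∃ y ∈ V L (l - 1), x = Q l (Rh y)})

end UCoxMasa

/-! In the universal Coxeter group the reduced word of `w` is the unique alternating word
representing it (`W` acts on alternating words by cancelling or prepending a letter), so every
`w ≠ 1` has exactly one left descent, its first letter. For `ℓ(w) = l ≥ 1` this gives
`q_{l+1} h δ_w = ∑ δ_{sw}` over the `L - 1` non-descents `s`, and `q_l h δ_{sw} = δ_w`
because `s` is the only descent of `sw`. The `p`-terms of the `T_s` never survive: they stay in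
the level of the vector they act on, which the projections discard. -/

namespace UCoxMasa

variable {L : ℕ}

abbrev AltWord (L : ℕ) : Type := {ω : List (Fin L) // ω.IsChain (· ≠ ·)}

namespace AltWord

def reduceCons (i : Fin L) (ω : AltWord L) : AltWord L :=
  if h : ω.1.head? = some i then ⟨ω.1.tail, ω.2.tail⟩
  else ⟨i :: ω.1, List.isChain_cons.mpr ⟨fun _ hj hij => h (hij ▸ hj), ω.2⟩⟩

lemma reduceCons_of_head {i : Fin L} {ω : AltWord L} (h : ω.1.head? = some i) :
    (reduceCons i ω).1 = ω.1.tail := by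
  simp [reduceCons, h]

lemma reduceCons_of_not_head {i : Fin L} {ω : AltWord L} (h : ω.1.head? ≠ some i) :
    (reduceCons i ω).1 = i :: ω.1 := by
  simp [reduceCons, h]

lemma reduceCons_involutive (i : Fin L) : Function.Involutive (reduceCons i) := by
  intro ω
  by_cases h : ω.1.head? = some i
  · obtain ⟨t, ht⟩ := List.head?_eq_some_iff.mp h
    have hne : (reduceCons i ω).1.head? ≠ some i := by
      have hchain := ht ▸ ω.2
      rw [reduceCons_of_head h, ht]
      cases t with
      | nil => simp
      | cons j t => simpa [eq_comm] using (List.isChain_cons_cons.mp hchain).1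
    exact Subtype.ext <| by
      rw [reduceCons_of_not_head hne, reduceCons_of_head h, ht, List.tail_cons]
  · exact Subtype.ext <| by
      rw [reduceCons_of_head (by simp [reduceCons_of_not_head h]), reduceCons_of_not_head h,
        List.tail_cons]

lemma length_reduceCons_of_head {i : Fin L} {ω : AltWord L} (h : ω.1.head? = some i) :
    (reduceCons i ω).1.length + 1 = ω.1.length := by
  obtain ⟨t, ht⟩ := List.head?_eq_some_iff.mp h
  simp [reduceCons_of_head h, ht]

lemma length_reduceCons_le (i : Fin L) (ω : AltWord L) :
    (reduceCons i ω).1.length ≤ ω.1.length + 1 := by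
  by_cases h : ω.1.head? = some i
  · have := length_reduceCons_of_head h; omega
  · simp [reduceCons_of_not_head h]

lemma wordProd_reduceCons (i : Fin L) (ω : AltWord L) :
    (cs L).wordProd (reduceCons i ω).1 = σ i * (cs L).wordProd ω.1 := by
  by_cases h : ω.1.head? = some i
  · obtain ⟨t, ht⟩ := List.head?_eq_some_iff.mp h
    simp [reduceCons_of_head h, ht, CoxeterSystem.wordProd_cons, σ]
  · rw [reduceCons_of_not_head h, CoxeterSystem.wordProd_cons]
    rfl

lemma isLiftable_reduceCons : (Mat L).IsLiftable fun i => (reduceCons_involutive i).toPerm := by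
  intro i j
  by_cases hij : i = j
  · subst hij
    simp only [Mat]
    exact Equiv.ext (reduceCons_involutive i)
  · simp [Mat, hij]

end AltWord

def altAction : W L →* Equiv.Perm (AltWord L) :=
  (cs L).lift ⟨_, AltWord.isLiftable_reduceCons⟩

def normalForm (w : W L) : AltWord L := altAction w ⟨[], .nil⟩

lemma normalForm_simple_mul (i : Fin L) (w : W L) :
    normalForm (σ i * w) = AltWord.reduceCons i (normalForm w) := by
  simp only [normalForm, map_mul, Equiv.Perm.coe_mul, Function.comp_apply]
  rw [altAction, σ, (cs L).lift_apply_simple AltWord.isLiftable_reduceCons]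
  rfl

lemma wordProd_normalForm (w : W L) : (cs L).wordProd (normalForm w).1 = w := by
  induction w using (cs L).simple_induction_left with
  | one => simp [normalForm]
  | mul_simple_left w i ih => rw [← σ, normalForm_simple_mul, AltWord.wordProd_reduceCons, ih]

lemma length_normalForm_wordProd_le (ω : List (Fin L)) :
    (normalForm ((cs L).wordProd ω)).1.length ≤ ω.length := by
  induction ω with
  | nil => simp [normalForm]
  | cons i ω ih =>
    rw [CoxeterSystem.wordProd_cons, ← σ, normalForm_simple_mul, List.length_cons]
    exact (AltWord.length_reduceCons_le i _).trans (by omega)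

lemma length_normalForm (w : W L) : (normalForm w).1.length = len w := by
  apply le_antisymm
  · obtain ⟨ω, hω, rfl⟩ := (cs L).exists_isReduced w
    exact (length_normalForm_wordProd_le ω).trans_eq hω.eq.symm
  · simpa only [wordProd_normalForm, len] using (cs L).length_wordProd_le (normalForm w).1

lemma simple_mul_simple_cancel_left (i : Fin L) (w : W L) : σ i * (σ i * w) = w :=
  (cs L).simple_mul_simple_cancel_left i

lemma len_simple_mul_lt_iff {i : Fin L} {w : W L} :
    len (σ i * w) < len w ↔ (normalForm w).1.head? = some i := by
  rw [← length_normalForm, ← length_normalForm, normalForm_simple_mul]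
  by_cases h : (normalForm w).1.head? = some i
  · have := AltWord.length_reduceCons_of_head h
    simp only [h, iff_true]
    omega
  · simp [AltWord.reduceCons_of_not_head h, h]

lemma eq_of_len_simple_mul_lt {i j : Fin L} {w : W L} (hi : len (σ i * w) < len w)
    (hj : len (σ j * w) < len w) : i = j := by
  rw [len_simple_mul_lt_iff] at hi hj
  exact Option.some_injective _ (hi.symm.trans hj)

lemma exists_len_simple_mul_lt {w : W L} (hw : len w ≠ 0) : ∃ i, len (σ i * w) < len w :=
  (cs L).exists_leftDescent_of_ne_one (mt (cs L).length_eq_zero_iff.mpr hw)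

lemma len_simple_mul_of_not_lt {i : Fin L} {w : W L} (h : ¬len (σ i * w) < len w) :
    len (σ i * w) = len w + 1 := by
  have := (cs L).length_simple_mul w i
  unfold len σ at *
  omega

section Operators

def IsHeckeGenerators (c : ℂ) (T : Fin L → H L →L[ℂ] H L) : Prop :=
  ∀ s w, T s (δ w) = if len (σ s * w) < len w then δ (σ s * w) + c • δ w else δ (σ s * w)

def IsLevelProjections (Q : ℕ → H L →L[ℂ] H L) : Prop :=
  ∀ k w, Q k (δ w) = if len w = k then δ w else 0

variable {c : ℂ} {T : Fin L → H L →L[ℂ] H L} {Q : ℕ → H L →L[ℂ] H L}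

lemma proj_sum_apply_δ_of_ne
    (hT : IsHeckeGenerators c T) (hQ : IsLevelProjections Q) {k : ℕ} {u : W L}
    (hk : len u ≠ k) :
    Q k ((∑ s, T s) (δ u)) = ∑ s, if len (σ s * u) = k then δ (σ s * u) else 0 := by
  rw [_root_.sum_apply, map_sum]
  refine Finset.sum_congr rfl fun s _ => ?_
  rw [hT, ← hQ]
  split_ifs
  · rw [map_add, map_smul, hQ k u, if_neg hk, smul_zero, add_zero]
  · rfl

lemma proj_sum_apply_δ_of_lt
    (hT : IsHeckeGenerators c T) (hQ : IsLevelProjections Q) {s : Fin L} {u : W L}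
    (hs : len (σ s * u) < len u) :
    Q (len (σ s * u)) ((∑ t, T t) (δ u)) = δ (σ s * u) := by
  rw [proj_sum_apply_δ_of_ne hT hQ hs.ne', Finset.sum_eq_single s, if_pos rfl]
  · intro t _ hts
    have ht : ¬len (σ t * u) < len u := fun ht => hts (eq_of_len_simple_mul_lt ht hs)
    rw [if_neg (by rw [len_simple_mul_of_not_lt ht]; omega)]
  · simp

lemma proj_sum_proj_sum_apply_δ
    (hT : IsHeckeGenerators c T) (hQ : IsLevelProjections Q) {w : W L} (hw : len w ≠ 0) :
    Q (len w) ((∑ s, T s) (Q (len w + 1) ((∑ s, T s) (δ w)))) = ((L : ℂ) - 1) • δ w := by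
  obtain ⟨i, hi⟩ := exists_len_simple_mul_lt hw
  have hterm : ∀ s, Q (len w) ((∑ t, T t)
      (if len (σ s * w) = len w + 1 then δ (σ s * w) else 0)) = if s = i then 0 else δ w := by
    intro s
    by_cases hs : s = i
    · subst hs
      rw [if_neg (by omega), if_pos rfl, map_zero, map_zero]
    · have hup := len_simple_mul_of_not_lt fun h => hs (eq_of_len_simple_mul_lt h hi)
      have hdown : len (σ s * (σ s * w)) < len (σ s * w) := by
        rw [simple_mul_simple_cancel_left, hup]; omega
      have := proj_sum_apply_δ_of_lt hT hQ hdown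
      rw [simple_mul_simple_cancel_left] at this
      rw [if_pos hup, if_neg hs, this]
  rw [proj_sum_apply_δ_of_ne hT hQ (by omega), map_sum, map_sum,
    Finset.sum_congr rfl fun s _ => hterm s]
  have : 1 ≤ L := Fin.pos i
  simp only [Finset.sum_ite, Finset.sum_const_zero, zero_add, Finset.sum_const, Finset.filter_ne',
    Finset.mem_univ, Finset.card_erase_of_mem, Finset.card_univ, Fintype.card_fin]
  rw [← Nat.cast_smul_eq_nsmul ℂ, Nat.cast_sub this, Nat.cast_one]

end Operators

theorem statement7_general
    (L : ℕ) (p : ℝ)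
    (T : Fin L → H L →L[ℂ] H L)
    (hT : ∀ (s : Fin L) (w : W L),
      T s (δ w) =
        if len (σ s * w) < len w then δ (σ s * w) + (p : ℂ) • δ w else δ (σ s * w))
    (h : H L →L[ℂ] H L) (hh : h = ∑ s, T s)
    (Q : ℕ → H L →L[ℂ] H L)
    (hQ : ∀ (l : ℕ) (w : W L), Q l (δ w) = if len w = l then δ w else 0)
    (l : ℕ) (hl : 1 ≤ l) (ξ : H L) (hξmem : ξ ∈ V L l) :
    Q l (h (Q (l + 1) (h ξ))) = ((L : ℂ) - 1) • ξ := by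
  subst hh
  have hbasis : Set.EqOn
      ((Q l ∘L (∑ s, T s) ∘L Q (l + 1) ∘L (∑ s, T s) : H L →L[ℂ] H L) : H L →ₗ[ℂ] H L)
      (((L : ℂ) - 1) • LinearMap.id : H L →ₗ[ℂ] H L) {x | ∃ w, len w = l ∧ x = δ w} := by
    rintro _ ⟨w, rfl, rfl⟩
    exact proj_sum_proj_sum_apply_δ hT hQ (by omega)
  exact LinearMap.eqOn_span hbasis hξmem

theorem statement7
    (L : ℕ) (hL : 3 ≤ L) (q p : ℝ) (hq : 0 < q) (hq1 : q ≤ 1)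
    (hp : p = (q - 1) / Real.sqrt q)
    (T : Fin L → H L →L[ℂ] H L)
    (hT : ∀ (s : Fin L) (w : W L),
      T s (δ w) =
        if len (σ s * w) < len w then δ (σ s * w) + (p : ℂ) • δ w else δ (σ s * w))
    (h : H L →L[ℂ] H L) (hh : h = ∑ s, T s)
    (Q : ℕ → H L →L[ℂ] H L)
    (hQ : ∀ (l : ℕ) (w : W L), Q l (δ w) = if len w = l then δ w else 0)
    (l : ℕ) (hl : 1 ≤ l) (ξ : H L) (hξmem : ξ ∈ V L l) :
    Q l (h (Q (l + 1) (h ξ))) = ((L : ℂ) - 1) • ξ :=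
  statement7_general L p T hT h hh Q hQ l hl ξ hξmem

end UCoxMasa
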